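/- arXiv:2305.17745 — 3 statements merged into one kernel-verified Lean document; each statement's English description precedes it below -/
import Mathlib

section
/- If G is a (P7, C5, kite, paraglider)-free graph containing an induced 7-cycle v1...v7, and B_i denotes the set of vertices outside the cycle whose neighborhood on the cycle is exactly {v_i, v_{i+2}, v_{i+3}} (indices mod 7), then |B_i| ≤ 1 for each i. -/
open SimpleGraph

/-- `G` contains no induced subgraph isomorphic to `H`. -/
def IsFreeOf {V W : Type*} (G : SimpleGraph V) (H : SimpleGraph W) : Prop :=
  ¬ Nonempty (H ↪g G)

/-- The kite: a diamond (vertices 0,1,2,3, all edges except 2-3) plus a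
pendant vertex 4 adjacent to the degree-2 vertex 2. -/
def kiteGraph : SimpleGraph (Fin 5) := SimpleGraph.fromRel (fun a b =>
  (a, b) ∈ [((0 : Fin 5), (1 : Fin 5)), (0, 2), (0, 3), (1, 2), (1, 3), (2, 4)])

/-- The paraglider: a 4-cycle 0-1-2-3-0 plus a vertex 4 adjacent to 0,1,2. -/
def paragliderGraph : SimpleGraph (Fin 5) := SimpleGraph.fromRel (fun a b =>
  (a, b) ∈ [((0 : Fin 5), (1 : Fin 5)), (1, 2), (2, 3), (3, 0), (4, 0), (4, 1), (4, 2)])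

/-- Vertices outside the 7-cycle `v` whose neighborhood on the cycle is
exactly `{v i, v (i+2)}`. -/
def Aset {V : Type*} (G : SimpleGraph V) (v : Fin 7 → V) (i : Fin 7) : Set V :=
  {x | x ∉ Set.range v ∧ ∀ j : Fin 7, G.Adj x (v j) ↔ (j = i ∨ j = i + 2)}

/-- Vertices outside the 7-cycle `v` whose neighborhood on the cycle is
exactly `{v i, v (i+2), v (i+3)}`. -/
def Bset {V : Type*} (G : SimpleGraph V) (v : Fin 7 → V) (i : Fin 7) : Set V :=
  {x | x ∉ Set.range v ∧ ∀ j : Fin 7, G.Adj x (v j) ↔ (j = i ∨ j = i + 2 ∨ j = i + 3)}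

set_option maxHeartbeats 1000000 in
theorem stmt_4 {V : Type*} (G : SimpleGraph V)
    (hP7 : IsFreeOf G (pathGraph 7)) (hC5 : IsFreeOf G (cycleGraph 5))
    (hkite : IsFreeOf G kiteGraph) (hpara : IsFreeOf G paragliderGraph)
    (v : Fin 7 → V) (hinj : Function.Injective v)
    (hcyc : ∀ i j : Fin 7, G.Adj (v i) (v j) ↔ (j = i + 1 ∨ i = j + 1))
    (i : Fin 7) :
    (Bset G v i).Subsingleton := by
  intro x hx y hy
  by_contra hne
  obtain ⟨hxr, hxadj⟩ := hx
  obtain ⟨hyr, hyadj⟩ := hy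
  set w : Fin 7 → V := fun a => v (i + a) with hw
  have hwadj : ∀ a b : Fin 7, G.Adj (w a) (w b) ↔ (b = a + 1 ∨ a = b + 1) := by
    intro a b
    rw [hw, hcyc]
    constructor
    · rintro (h | h)
      · left; rwa [add_assoc, add_right_inj] at h
      · right; rwa [add_assoc, add_right_inj] at h
    · rintro (h | h)
      · left; rw [add_assoc, add_right_inj]; exact h
      · right; rw [add_assoc, add_right_inj]; exact h
  have hxw : ∀ a : Fin 7, G.Adj x (w a) ↔ (a = 0 ∨ a = 2 ∨ a = 3) := by
    intro a
    rw [hw, hxadj, add_eq_left, add_right_inj, add_right_inj]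
  have hyw : ∀ a : Fin 7, G.Adj y (w a) ↔ (a = 0 ∨ a = 2 ∨ a = 3) := by
    intro a
    rw [hw, hyadj, add_eq_left, add_right_inj, add_right_inj]
  have hwne : ∀ a b : Fin 7, a ≠ b → w a ≠ w b := by
    intro a b hab h
    exact hab (by simpa [add_right_inj] using hinj h)
  have hxw' : ∀ a : Fin 7, x ≠ w a := fun a h => hxr ⟨i + a, h.symm⟩
  have hyw' : ∀ a : Fin 7, y ≠ w a := fun a h => hyr ⟨i + a, h.symm⟩
  by_cases hA : G.Adj x y
  · -- kite on x y (w 0) (w 2), pendant w 6 on w 0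
    apply hkite
    refine ⟨⟨⟨![x, y, w 0, w 2, w 6], ?_⟩, ?_⟩⟩
    · rw [← List.nodup_ofFn]
      simp only [List.ofFn_succ, Fin.succ_zero_eq_one, Matrix.cons_val_zero,
        Matrix.cons_val_one, Matrix.head_cons, List.ofFn_zero, Matrix.cons_val_succ,
        List.nodup_cons, List.mem_cons, List.mem_singleton, List.not_mem_nil,
        List.nodup_nil, not_false_eq_true, and_true, not_or, List.mem_nil_iff]
      exact ⟨⟨hne, hxw' 0, hxw' 2, hxw' 6⟩, ⟨hyw' 0, hyw' 2, hyw' 6⟩,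
        ⟨hwne 0 2 (by decide), hwne 0 6 (by decide)⟩, hwne 2 6 (by decide)⟩
    · have hA' : G.Adj y x := hA.symm
      intro a b
      fin_cases a <;> fin_cases b <;>
        simp [kiteGraph, hA, hA', hwadj, hxw, hyw, G.adj_comm _ x, G.adj_comm _ y] <;>
        skip
  · -- paraglider: cycle y (w 2) x (w 0); apex w 3 adj y, w 2, x
    apply hpara
    have hA' : ¬ G.Adj y x := fun h => hA h.symm
    refine ⟨⟨⟨![y, w 2, x, w 0, w 3], ?_⟩, ?_⟩⟩
    · rw [← List.nodup_ofFn]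
      simp only [List.ofFn_succ, Fin.succ_zero_eq_one, Matrix.cons_val_zero,
        Matrix.cons_val_one, Matrix.head_cons, List.ofFn_zero, Matrix.cons_val_succ,
        List.nodup_cons, List.mem_cons, List.mem_singleton, List.not_mem_nil,
        List.nodup_nil, not_false_eq_true, and_true, not_or, List.mem_nil_iff]
      exact ⟨⟨hyw' 2, fun h => hne h.symm, hyw' 0, hyw' 3⟩,
        ⟨Ne.symm (hxw' 2), hwne 2 0 (by decide), hwne 2 3 (by decide)⟩,
        ⟨hxw' 0, hxw' 3⟩, hwne 0 3 (by decide)⟩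
    · intro a b
      fin_cases a <;> fin_cases b <;>
        simp [paragliderGraph, hA, hA', hwadj, hxw, hyw, G.adj_comm _ x, G.adj_comm _ y] <;>
        skip
end

section
/- If G is a connected (P7, C5, paw)-free graph containing an induced 7-cycle, then every vertex of G adjacent to the cycle has neighborhood on the cycle equal to {v_i, v_{i+2}} for some i (indices mod 7). -/
/-! Let `S` be the set of indices of the cycle vertices adjacent to `x`. By paw-freeness `S`
contains no two consecutive indices: if `x ∼ v j, v (j+1)`, the paw forces `x ∼ v (j+2), v (j+3)`,
and then `v j, v (j+1), x, v (j+3)` is a paw. Hence two indices of `S` at distance 3 close an induced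
`C5` through `x`, and an index `j ∈ S` with `j ± 2 ∉ S` starts an induced `P7` at `x`. The only
nonempty subsets of `ℤ/7` obeying these three rules are the sets `{i, i + 2}`.

The forbidden graphs have no two vertices with the same neighbourhood, so a map into `G` that
preserves and reflects adjacency is automatically injective. -/

open SimpleGraph

/-- The paw: a triangle 0,1,2 with a pendant edge 2-3. -/
def pawGraph : SimpleGraph (Fin 4) := SimpleGraph.fromRel (fun a b =>
  (a, b) ∈ [((0 : Fin 4), (1 : Fin 4)), (0, 2), (1, 2), (2, 3)])

namespace SimpleGraph

theorem injective_neighborSet_iff {W : Type*} {H : SimpleGraph W} :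
    Function.Injective H.neighborSet ↔ ∀ p q, (∀ r, H.Adj p r ↔ H.Adj q r) → p = q := by
  simp only [Function.Injective, Set.ext_iff, mem_neighborSet]

theorem pawGraph_injective_neighborSet : Function.Injective pawGraph.neighborSet :=
  injective_neighborSet_iff.2 <| by
    simp only [pawGraph, fromRel_adj]
    set_option synthInstance.maxSize 1024 in decide

theorem cycleGraph_five_injective_neighborSet : Function.Injective (cycleGraph 5).neighborSet :=
  injective_neighborSet_iff.2 <| by simp only [cycleGraph_adj]; decide

theorem pathGraph_seven_injective_neighborSet : Function.Injective (pathGraph 7).neighborSet :=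
  injective_neighborSet_iff.2 <| by simp only [pathGraph_adj]; decide

end SimpleGraph

theorem IsFreeOf.not_forall_adj_iff {V W : Type*} {G : SimpleGraph V} {H : SimpleGraph W}
    (hG : IsFreeOf G H) (hH : Function.Injective H.neighborSet) (f : W → V) :
    ¬ ∀ p q, G.Adj (f p) (f q) ↔ H.Adj p q := by
  intro hf
  refine hG ⟨⟨⟨f, fun p q hpq => hH (Set.ext fun r => ?_)⟩, hf _ _⟩⟩
  simp only [mem_neighborSet, ← hf, hpq]

theorem adj_of_isFreeOf_pawGraph {V : Type*} {G : SimpleGraph V} (hpaw : IsFreeOf G pawGraph)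
    {a b c x : V} (hab : G.Adj a b) (hax : G.Adj a x) (hbx : G.Adj b x) (hbc : G.Adj b c)
    (hac : ¬ G.Adj a c) : G.Adj x c := by
  by_contra hxc
  refine hpaw.not_forall_adj_iff pawGraph_injective_neighborSet ![a, x, b, c] fun p q => ?_
  fin_cases p <;> fin_cases q <;>
    simp [pawGraph, hab, hax, hbx, hbc, hac, hxc, hab.symm, hax.symm, hbx.symm, hbc.symm,
      mt G.adj_symm hac, mt G.adj_symm hxc]

namespace SimpleGraph

variable {V : Type*}

def IsInducedCycle {n : ℕ} [NeZero n] (G : SimpleGraph V) (v : Fin n → V) : Prop :=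
  ∀ i j, G.Adj (v i) (v j) ↔ (j = i + 1 ∨ i = j + 1)

namespace IsInducedCycle

theorem rotate {n : ℕ} [NeZero n] {G : SimpleGraph V} {v : Fin n → V}
    (hv : G.IsInducedCycle v) (k : Fin n) : G.IsInducedCycle (fun i => v (k + i)) := by
  intro i j
  rw [hv]
  simp only [add_assoc, add_right_inj]

variable {G : SimpleGraph V} {v : Fin 7 → V} {x : V}

theorem not_adj_one_of_adj_zero (hpaw : IsFreeOf G pawGraph) (hv : G.IsInducedCycle v)
    (h0 : G.Adj x (v 0)) : ¬ G.Adj x (v 1) := by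
  intro h1
  have cyc : ∀ i j : Fin 7, (j = i + 1 ∨ i = j + 1) → G.Adj (v i) (v j) := fun i j => (hv i j).2
  have acyc : ∀ i j : Fin 7, ¬ (j = i + 1 ∨ i = j + 1) → ¬ G.Adj (v i) (v j) :=
    fun i j => mt (hv i j).1
  have h2 : G.Adj x (v 2) := adj_of_isFreeOf_pawGraph hpaw (cyc 0 1 (by decide)) h0.symm h1.symm
    (cyc 1 2 (by decide)) (acyc 0 2 (by decide))
  have h3 : G.Adj x (v 3) := adj_of_isFreeOf_pawGraph hpaw (cyc 1 2 (by decide)) h1.symm h2.symm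
    (cyc 2 3 (by decide)) (acyc 1 3 (by decide))
  exact acyc 1 3 (by decide) <|
    adj_of_isFreeOf_pawGraph hpaw h0.symm (cyc 0 1 (by decide)) h1 h3 (acyc 0 3 (by decide))

theorem not_adj_add_one (hpaw : IsFreeOf G pawGraph) (hv : G.IsInducedCycle v) (j : Fin 7)
    (hj : G.Adj x (v j)) : ¬ G.Adj x (v (j + 1)) := by
  simpa using (hv.rotate j).not_adj_one_of_adj_zero hpaw (by simpa using hj)

theorem not_adj_three_of_adj_zero (hpaw : IsFreeOf G pawGraph) (hC5 : IsFreeOf G (cycleGraph 5))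
    (hv : G.IsInducedCycle v) (h0 : G.Adj x (v 0)) : ¬ G.Adj x (v 3) := by
  intro h3
  have h1 : ¬ G.Adj x (v 1) := hv.not_adj_add_one hpaw 0 h0
  have h2 : ¬ G.Adj x (v 2) := fun h2 => hv.not_adj_add_one hpaw 2 h2 h3
  refine hC5.not_forall_adj_iff cycleGraph_five_injective_neighborSet
    ![x, v 0, v 1, v 2, v 3] fun p q => ?_
  fin_cases p <;> fin_cases q <;>
    simp [hv _ _, cycleGraph_adj, G.adj_comm _ x, h0, h1, h2, h3] <;> decide

theorem not_adj_add_three (hpaw : IsFreeOf G pawGraph) (hC5 : IsFreeOf G (cycleGraph 5))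
    (hv : G.IsInducedCycle v) (j : Fin 7) (hj : G.Adj x (v j)) : ¬ G.Adj x (v (j + 3)) := by
  simpa using (hv.rotate j).not_adj_three_of_adj_zero hpaw hC5 (by simpa using hj)

theorem adj_two_or_adj_five_of_adj_zero (hpaw : IsFreeOf G pawGraph)
    (hC5 : IsFreeOf G (cycleGraph 5)) (hP7 : IsFreeOf G (pathGraph 7))
    (hv : G.IsInducedCycle v) (h0 : G.Adj x (v 0)) : G.Adj x (v 2) ∨ G.Adj x (v 5) := by
  by_contra! ⟨h2, h5⟩
  have h1 : ¬ G.Adj x (v 1) := hv.not_adj_add_one hpaw 0 h0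
  have h3 : ¬ G.Adj x (v 3) := hv.not_adj_add_three hpaw hC5 0 h0
  have h4 : ¬ G.Adj x (v 4) := fun h4 => hv.not_adj_add_three hpaw hC5 4 h4 h0
  refine hP7.not_forall_adj_iff pathGraph_seven_injective_neighborSet
    ![x, v 0, v 1, v 2, v 3, v 4, v 5] fun p q => ?_
  fin_cases p <;> fin_cases q <;>
    simp [hv _ _, pathGraph_adj, G.adj_comm _ x, h0, h1, h2, h3, h4, h5]

theorem adj_add_two_or_adj_add_five (hpaw : IsFreeOf G pawGraph)
    (hC5 : IsFreeOf G (cycleGraph 5)) (hP7 : IsFreeOf G (pathGraph 7))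
    (hv : G.IsInducedCycle v) (j : Fin 7) (hj : G.Adj x (v j)) :
    G.Adj x (v (j + 2)) ∨ G.Adj x (v (j + 5)) := by
  simpa using (hv.rotate j).adj_two_or_adj_five_of_adj_zero hpaw hC5 hP7 (by simpa using hj)

end IsInducedCycle

end SimpleGraph

theorem Fin.exists_forall_iff_eq_or_eq_add_two {S : Fin 7 → Prop}
    (h1 : ∀ j, S j → ¬ S (j + 1)) (h3 : ∀ j, S j → ¬ S (j + 3))
    (h25 : ∀ j, S j → S (j + 2) ∨ S (j + 5)) {j : Fin 7} (hj : S j) :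
    ∃ i, ∀ k, S k ↔ k = i ∨ k = i + 2 := by
  obtain ⟨i, hi, hi2⟩ : ∃ i, S i ∧ S (i + 2) := by
    rcases h25 j hj with h | h
    · exact ⟨j, hj, h⟩
    · exact ⟨j + 5, h, by rwa [show j + 5 + 2 = j by grind]⟩
  refine ⟨i, fun k => ⟨fun hk => ?_, by rintro (rfl | rfl) <;> assumption⟩⟩
  obtain ⟨d, rfl⟩ : ∃ d, k = i + d := ⟨k - i, by grind⟩
  fin_cases d
  · simp
  · exact absurd hk (h1 i hi)
  · simp
  · exact absurd hk (h3 i hi)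
  · exact absurd (by rwa [show i + 4 + 3 = i by grind]) (h3 (i + 4) hk)
  · exact absurd (by rwa [show i + 2 + 3 = i + 5 by grind]) (h3 (i + 2) hi2)
  · exact absurd (by rwa [show i + 6 + 1 = i by grind]) (h1 (i + 6) hk)

theorem stmt_8_general {V : Type*} (G : SimpleGraph V)
    (hP7 : IsFreeOf G (pathGraph 7)) (hC5 : IsFreeOf G (cycleGraph 5))
    (hpaw : IsFreeOf G pawGraph)
    (v : Fin 7 → V)
    (hcyc : ∀ i j : Fin 7, G.Adj (v i) (v j) ↔ (j = i + 1 ∨ i = j + 1))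
    (x : V) (hadj : ∃ j : Fin 7, G.Adj x (v j)) :
    ∃ i : Fin 7, ∀ j : Fin 7, G.Adj x (v j) ↔ (j = i ∨ j = i + 2) := by
  have hv : G.IsInducedCycle v := hcyc
  obtain ⟨j, hj⟩ := hadj
  exact Fin.exists_forall_iff_eq_or_eq_add_two (hv.not_adj_add_one hpaw)
    (hv.not_adj_add_three hpaw hC5) (hv.adj_add_two_or_adj_add_five hpaw hC5 hP7) hj

theorem stmt_8 {V : Type*} (G : SimpleGraph V)
    (hconn : G.Connected)
    (hP7 : IsFreeOf G (pathGraph 7)) (hC5 : IsFreeOf G (cycleGraph 5))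
    (hpaw : IsFreeOf G pawGraph)
    (v : Fin 7 → V) (hinj : Function.Injective v)
    (hcyc : ∀ i j : Fin 7, G.Adj (v i) (v j) ↔ (j = i + 1 ∨ i = j + 1))
    (x : V) (hxL : x ∉ Set.range v) (hadj : ∃ j : Fin 7, G.Adj x (v j)) :
    ∃ i : Fin 7, ∀ j : Fin 7, G.Adj x (v j) ↔ (j = i ∨ j = i + 2) :=
  stmt_8_general G hP7 hC5 hpaw v hcyc x hadj
end

section
/- If G is perfectly divisible, then χ(G) ≤ ω(G)(ω(G)+1)/2, i.e., χ(G) ≤ binomial(ω(G)+1, 2). -/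
open SimpleGraph

/-- A graph is perfect if every induced subgraph has chromatic number
equal to its clique number. -/
def IsPerfect {V : Type*} (G : SimpleGraph V) : Prop :=
  ∀ s : Set V, (G.induce s).chromaticNumber = ((G.induce s).cliqueNum : ℕ∞)

/-- A graph is perfectly divisible if the vertex set of each of its induced
subgraphs `H` can be partitioned into `A` and `B` with `H[A]` perfect and
`ω(H[B]) < ω(H)` (the latter required when `ω(H) > 0`). -/
def PerfectlyDivisible {V : Type*} (G : SimpleGraph V) : Prop :=
  ∀ s : Set V, ∃ A B : Set V, A ∪ B = s ∧ Disjoint A B ∧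
    IsPerfect (G.induce A) ∧
    (0 < (G.induce s).cliqueNum → (G.induce B).cliqueNum < (G.induce s).cliqueNum)

/-!
Induct on the clique number `ω` of an induced subgraph `H`. Split `H` into a perfect part `A` and
a part `B` with `ω(B) < ω`: `A` is `ω`-colourable because it is perfect, `B` is
`binom(ω, 2)`-colourable by induction, and colouring them with disjoint palettes uses
`ω + binom(ω, 2) = binom(ω + 1, 2)` colours.
-/

namespace SimpleGraph

variable {α β : Type*} {G : SimpleGraph α}

lemma cliqueNum_le_of_embedding [Finite β] {H : SimpleGraph β} (f : G ↪g H) :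
    G.cliqueNum ≤ H.cliqueNum := by
  obtain ⟨s, hs⟩ := G.exists_isNClique_cliqueNum
  have hclique : H.IsClique (s.map f.toEmbedding : Set β) :=
    hs.isClique.finsetMap.mono ((map_le_iff_le_comap _ _ _).2 fun _ _ ↦ f.map_adj_iff.2)
  simpa [hs.card_eq] using hclique.card_le_cliqueNum

lemma isEmpty_of_cliqueNum_eq_zero [Finite α] (h : G.cliqueNum = 0) : IsEmpty α := by
  refine ⟨fun v ↦ ?_⟩
  have : G.IsClique (({v} : Finset α) : Set α) := by simp
  simpa [h] using this.card_le_cliqueNum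

lemma colorable_induce_union {A B : Set α} {m k : ℕ} (hA : (G.induce A).Colorable m)
    (hB : (G.induce B).Colorable k) : (G.induce (A ∪ B)).Colorable (m + k) := by
  classical
  obtain ⟨CA⟩ := hA
  obtain ⟨CB⟩ := hB
  have mem_B (v : ↥(A ∪ B)) (hv : (v : α) ∉ A) : (v : α) ∈ B := v.2.resolve_left hv
  let C : G.induce (A ∪ B) |>.Coloring (Fin m ⊕ Fin k) :=
    Coloring.mk (fun v ↦ if hv : (v : α) ∈ A then .inl (CA ⟨v, hv⟩) else .inr (CB ⟨v, mem_B v hv⟩))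
      fun {u v} huv ↦ by
        by_cases hu : (u : α) ∈ A <;> by_cases hv : (v : α) ∈ A <;> simp only [hu, hv, dif_pos,
          dif_neg, not_false_eq_true, ne_eq, reduceCtorEq, Sum.inl.injEq, Sum.inr.injEq]
        · exact CA.valid (v := ⟨u, hu⟩) (w := ⟨v, hv⟩) huv
        · exact CB.valid (v := ⟨u, mem_B u hu⟩) (w := ⟨v, mem_B v hv⟩) huv
  simpa using C.colorable

end SimpleGraph

lemma IsPerfect.colorable_cliqueNum {V : Type*} [Finite V] {G : SimpleGraph V}
    (hG : IsPerfect G) : G.Colorable G.cliqueNum := by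
  have hcolor : (G.induce Set.univ).Colorable G.cliqueNum := by
    rw [← chromaticNumber_le_iff_colorable, hG Set.univ, Nat.cast_le]
    exact cliqueNum_induce_le Set.univ
  exact hcolor.of_hom (induceUnivIso G).symm.toHom

lemma PerfectlyDivisible.colorable_induce_choose {V : Type*} [Finite V] {G : SimpleGraph V}
    (hG : PerfectlyDivisible G) (n : ℕ) (s : Set V) (hs : (G.induce s).cliqueNum ≤ n) :
    (G.induce s).Colorable ((n + 1).choose 2) := by
  induction n generalizing s with
  | zero =>
    have := isEmpty_of_cliqueNum_eq_zero (Nat.le_zero.mp hs)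
    exact .of_isEmpty _
  | succ n ih =>
    obtain ⟨A, B, rfl, -, hA, hB⟩ := hG s
    obtain h0 | h0 := (G.induce (A ∪ B)).cliqueNum.eq_zero_or_pos
    · have := isEmpty_of_cliqueNum_eq_zero h0
      exact .of_isEmpty _
    have hcolorA : (G.induce A).Colorable (n + 1) :=
      hA.colorable_cliqueNum.mono <|
        (cliqueNum_le_of_embedding (G.induceHomOfLE Set.subset_union_left)).trans hs
    have hcolorB : (G.induce B).Colorable ((n + 1).choose 2) := ih B (by have := hB h0; omega)
    rw [Nat.choose_succ_succ', Nat.choose_one_right]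
    exact colorable_induce_union hcolorA hcolorB

theorem stmt_14 {V : Type*} [Fintype V] (G : SimpleGraph V)
    (hpd : PerfectlyDivisible G) :
    G.chromaticNumber ≤ ((G.cliqueNum + 1).choose 2 : ℕ) :=
  ((hpd.colorable_induce_choose _ Set.univ (cliqueNum_induce_le Set.univ)).of_hom
    (induceUnivIso G).symm.toHom).chromaticNumber_le
end
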